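/- Let {(x_μ, y_μ)}_{μ=1}^P ⊂ ℝ^D × ℝ be a symmetric dataset whose input covariance Σ = (1/P)∑_μ x_μx_μᵀ is invertible, and let w* = Σ⁻¹β with β = (1/P)∑_μ y_μx_μ. Then: (1) for every two-layer bias-free leaky ReLU network f(x) = ∑_{h=1}^H w_{2h}·max(w_{1h}ᵀx, α·w_{1h}ᵀx) with α ∈ [0,1], the empirical square loss satisfies (1/2P)·∑_μ (y_μ − f(x_μ))² ≥ (1/2P)·∑_μ (y_μ − w*ᵀx_μ)²; and (2) this lower bound is attained: there exists a two-layer bias-free leaky ReLU network (e.g., with H = 2 hidden units) implementing exactly the linear map x ↦ w*ᵀx. Hence the ordinary-least-squares linear predictor is a global minimizer of the square loss over two-layer bias-free leaky ReLU networks on a symmetric dataset. -/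

import Mathlib

/-!
Write σ(z) = max(z, αz). Since max + min = sum, σ(z) − σ(−z) = (1 + α)z for every α, so the odd
part v ↦ (f v − f (−v))/2 of a network f is linear. On a symmetric dataset, pairing each sample
with its mirror image and using (a + b)² ≤ 2(a² + b²) shows that the odd part has no larger loss
than f. Among linear predictors, w* has minimal loss because its residual is orthogonal to every
input (the normal equations Σ w* = β). The same identity lets two hidden units, with weights
±w* and ±(1 + α)⁻¹, realise x ↦ w*ᵀx.
-/

open Matrix Finset

def leakyRelu (α z : ℝ) : ℝ := max z (α * z)

theorem leakyRelu_sub_leakyRelu_neg (α z : ℝ) :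
    leakyRelu α z - leakyRelu α (-z) = (1 + α) * z := by
  have hneg : leakyRelu α (-z) = -min z (α * z) := by
    rw [leakyRelu, mul_neg, max_neg_neg]
  rw [hneg, sub_neg_eq_add, leakyRelu, max_add_min]
  ring

theorem sum_sq_sub_half_sub_comp_le {ι : Type*} [Fintype ι] (π : Equiv.Perm ι) (y f : ι → ℝ)
    (hy : ∀ μ, y (π μ) = -y μ) :
    ∑ μ, (y μ - (f μ - f (π μ)) / 2) ^ 2 ≤ ∑ μ, (y μ - f μ) ^ 2 := by
  have hterm : ∀ μ, 2 * (y μ - (f μ - f (π μ)) / 2) ^ 2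
      ≤ (y μ - f μ) ^ 2 + (y (π μ) - f (π μ)) ^ 2 := fun μ => by
    rw [hy]; nlinarith [sq_nonneg (f μ + f (π μ))]
  have hsum := sum_le_sum fun μ (_ : μ ∈ univ) => hterm μ
  rw [← mul_sum, sum_add_distrib, Equiv.sum_comp π fun μ => (y μ - f μ) ^ 2] at hsum
  linarith

section

variable {ι κ n : Type*} [Fintype ι] [Fintype κ] [Fintype n]

def twoLayerNet (α : ℝ) (w1 : κ → n → ℝ) (w2 : κ → ℝ) (v : n → ℝ) : ℝ :=
  ∑ h, w2 h * leakyRelu α (w1 h ⬝ᵥ v)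

theorem twoLayerNet_sub_twoLayerNet_neg (α : ℝ) (w1 : κ → n → ℝ) (w2 : κ → ℝ) (v : n → ℝ) :
    twoLayerNet α w1 w2 v - twoLayerNet α w1 w2 (-v) = ((1 + α) • ∑ h, w2 h • w1 h) ⬝ᵥ v := by
  simp only [twoLayerNet, ← sum_sub_distrib, ← mul_sub, dotProduct_neg,
    leakyRelu_sub_leakyRelu_neg, smul_dotProduct, sum_dotProduct, smul_eq_mul, mul_sum]
  exact sum_congr rfl fun h _ => by ring

theorem twoLayerNet_eq_dotProduct {α : ℝ} (hα : 1 + α ≠ 0) (w v : n → ℝ) :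
    twoLayerNet α ![w, -w] ![(1 + α)⁻¹, -(1 + α)⁻¹] v = w ⬝ᵥ v := by
  have h := leakyRelu_sub_leakyRelu_neg α (w ⬝ᵥ v)
  simp only [twoLayerNet, Fin.sum_univ_two, cons_val_zero, cons_val_one, neg_dotProduct]
  field_simp
  linarith

theorem sum_sq_sub_twoLayerNet_ge {π : Equiv.Perm ι} {x : ι → n → ℝ} {y : ι → ℝ}
    (hsym : ∀ μ, x (π μ) = -x μ ∧ y (π μ) = -y μ) (α : ℝ) (w1 : κ → n → ℝ) (w2 : κ → ℝ) :
    ∑ μ, (y μ - (((1 + α) / 2) • ∑ h, w2 h • w1 h) ⬝ᵥ x μ) ^ 2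
      ≤ ∑ μ, (y μ - twoLayerNet α w1 w2 (x μ)) ^ 2 := by
  have hodd : ∀ μ, (((1 + α) / 2) • ∑ h, w2 h • w1 h) ⬝ᵥ x μ
      = (twoLayerNet α w1 w2 (x μ) - twoLayerNet α w1 w2 (x (π μ))) / 2 := fun μ => by
    rw [(hsym μ).1, twoLayerNet_sub_twoLayerNet_neg, div_eq_mul_inv, smul_dotProduct,
      smul_dotProduct, smul_eq_mul, smul_eq_mul]
    ring
  simp_rw [hodd]
  exact sum_sq_sub_half_sub_comp_le π _ _ fun μ => (hsym μ).2

theorem sum_residual_smul_eq_zero {x : ι → n → ℝ} {y : ι → ℝ} {w : n → ℝ}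
    (hw : (∑ μ, vecMulVec (x μ) (x μ)) *ᵥ w = ∑ μ, y μ • x μ) :
    ∑ μ, (y μ - w ⬝ᵥ x μ) • x μ = 0 := by
  simp only [sub_smul, sum_sub_distrib, ← hw, sum_mulVec, vecMulVec_mulVec, op_smul_eq_smul,
    dotProduct_comm, sub_self]

theorem sum_sq_residual_le {x : ι → n → ℝ} {y : ι → ℝ} {w₀ : n → ℝ}
    (hw₀ : ∑ μ, (y μ - w₀ ⬝ᵥ x μ) • x μ = 0) (w : n → ℝ) :
    ∑ μ, (y μ - w₀ ⬝ᵥ x μ) ^ 2 ≤ ∑ μ, (y μ - w ⬝ᵥ x μ) ^ 2 := by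
  have hcross : ∑ μ, (y μ - w₀ ⬝ᵥ x μ) * ((w₀ - w) ⬝ᵥ x μ) = 0 := by
    simpa [dotProduct_sum, dotProduct_smul, mul_comm] using congrArg ((w₀ - w) ⬝ᵥ ·) hw₀
  calc ∑ μ, (y μ - w₀ ⬝ᵥ x μ) ^ 2
      ≤ ∑ μ, ((y μ - w₀ ⬝ᵥ x μ) ^ 2 + 2 * ((y μ - w₀ ⬝ᵥ x μ) * ((w₀ - w) ⬝ᵥ x μ))
          + ((w₀ - w) ⬝ᵥ x μ) ^ 2) := by
        rw [sum_add_distrib, sum_add_distrib, ← mul_sum, hcross, mul_zero, add_zero]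
        exact le_add_of_nonneg_right (sum_nonneg fun μ _ => sq_nonneg _)
    _ = ∑ μ, (y μ - w ⬝ᵥ x μ) ^ 2 := sum_congr rfl fun μ _ => by rw [sub_dotProduct]; ring

theorem sum_vecMulVec_mulVec_eq {P : ℕ} {x : Fin P → n → ℝ} {y : Fin P → ℝ} {w : n → ℝ}
    (hw : ((P : ℝ)⁻¹ • ∑ μ, vecMulVec (x μ) (x μ)) *ᵥ w = (P : ℝ)⁻¹ • ∑ μ, y μ • x μ) :
    (∑ μ, vecMulVec (x μ) (x μ)) *ᵥ w = ∑ μ, y μ • x μ := by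
  rcases Nat.eq_zero_or_pos P with rfl | hP
  · simp
  rw [smul_mulVec] at hw
  exact smul_right_injective _ (inv_ne_zero (by positivity)) hw

end

/-- on a symmetric dataset with invertible input covariance, the OLS
linear predictor w* = Σ⁻¹β is a global minimizer of the square loss over all
two-layer bias-free leaky ReLU networks, and it is attained by such a network. -/
theorem stmt_16 (D P : ℕ) (x : Fin P → Fin D → ℝ) (y : Fin P → ℝ)
    (hsym : ∃ π : Equiv.Perm (Fin P), ∀ μ, x (π μ) = -x μ ∧ y (π μ) = -y μ)
    (Sig : Matrix (Fin D) (Fin D) ℝ)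
    (hSig : Sig = (P : ℝ)⁻¹ • ∑ μ, Matrix.of fun i j => x μ i * x μ j)
    (hinv : IsUnit Sig.det)
    (β : Fin D → ℝ) (hβ : β = (P : ℝ)⁻¹ • ∑ μ, y μ • x μ)
    (wstar : Fin D → ℝ) (hw : wstar = Sig⁻¹ *ᵥ β) :
    (∀ (H : ℕ) (α : ℝ), α ∈ Set.Icc (0 : ℝ) 1 →
      ∀ (w1 : Fin H → Fin D → ℝ) (w2 : Fin H → ℝ),
        (1 / (2 * (P : ℝ))) * ∑ μ, (y μ - ∑ i, wstar i * x μ i) ^ 2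
          ≤ (1 / (2 * (P : ℝ))) * ∑ μ,
              (y μ - ∑ h, w2 h * max (∑ i, w1 h i * x μ i)
                (α * ∑ i, w1 h i * x μ i)) ^ 2) ∧
    (∃ (H : ℕ) (α : ℝ), α ∈ Set.Icc (0 : ℝ) 1 ∧
      ∃ (w1 : Fin H → Fin D → ℝ) (w2 : Fin H → ℝ),
        ∀ v : Fin D → ℝ,
          (∑ h, w2 h * max (∑ i, w1 h i * v i) (α * ∑ i, w1 h i * v i))
            = ∑ i, wstar i * v i) := by
  obtain ⟨π, hπ⟩ := hsym
  have hnormal : Sig *ᵥ wstar = β := by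
    rw [hw, mulVec_mulVec, mul_nonsing_inv _ hinv, one_mulVec]
  have hSig' : Sig = (P : ℝ)⁻¹ • ∑ μ, vecMulVec (x μ) (x μ) := hSig
  have hortho : ∑ μ, (y μ - wstar ⬝ᵥ x μ) • x μ = 0 :=
    sum_residual_smul_eq_zero (sum_vecMulVec_mulVec_eq (hSig' ▸ hβ ▸ hnormal))
  refine ⟨fun H α _ w1 w2 => ?_, ⟨2, 0, ⟨le_rfl, zero_le_one⟩, _, _,
    twoLayerNet_eq_dotProduct (by norm_num) wstar⟩⟩
  refine mul_le_mul_of_nonneg_left ?_ (by positivity)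
  exact (sum_sq_residual_le hortho _).trans (sum_sq_sub_twoLayerNet_ge hπ α w1 w2)
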